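/- arXiv:2505.08901 — 6 statements merged into one kernel-verified Lean document; each statement's English description precedes it below -/
import Mathlib

section
/- Let (X, 𝒜, μ) be a probability space and (E_i)_{i∈ℕ} a sequence of measurable sets with ∑_{i=1}^∞ μ(E_i) = ∞. Suppose there exists C > 0 such that ∑_{s,t=1}^Q μ(E_s ∩ E_t) ≤ C·(∑_{s=1}^Q μ(E_s))² for infinitely many Q ∈ ℕ. Then μ(limsup_{i→∞} E_i) ≥ 1/C. -/
/-!
Cauchy–Schwarz for `f = ∑_{s ∈ F} 1_{E s}`, which vanishes off `⋃_{s ∈ F} E s`, gives the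
Chung–Erdős inequality `(∑ μ (E s))² ≤ μ (⋃ E s) * ∑∑ μ (E s ∩ E t)`. Applied to the block
`n < s ≤ Q` with `Q` from `hquasi`, it bounds the tail `μ (⋃_{i ≥ n} E i)` from below by
`(1 - A n / A Q)² / C`, where `A Q = ∑_{s ≤ Q} μ (E s) → ∞`. Letting `Q → ∞` gives `1 / C` for
every tail, hence for the limsup.
-/

open MeasureTheory Filter Set
open scoped ENNReal Topology

section Measure

variable {X ι : Type*} [MeasurableSpace X] (μ : Measure X)

lemma sq_setLIntegral_le_measure_mul_setLIntegral_sq (s : Set X) {f : X → ℝ≥0∞}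
    (hf : AEMeasurable f (μ.restrict s)) :
    (∫⁻ x in s, f x ∂μ) ^ 2 ≤ μ s * ∫⁻ x in s, f x ^ 2 ∂μ := by
  have holder := ENNReal.lintegral_mul_le_Lp_mul_Lq (μ.restrict s) .two_two hf
    (aemeasurable_const (b := (1 : ℝ≥0∞)))
  have sq_rpow_half (a : ℝ≥0∞) : (a ^ (1 / 2 : ℝ)) ^ 2 = a := by
    simpa using ENNReal.rpow_inv_natCast_pow two_ne_zero a
  calc (∫⁻ x in s, f x ∂μ) ^ 2 = (∫⁻ x in s, f x * 1 ∂μ) ^ 2 := by simp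
    _ ≤ ((∫⁻ x in s, f x ^ (2 : ℝ) ∂μ) ^ (1 / 2 : ℝ) *
          (∫⁻ _ in s, 1 ^ (2 : ℝ) ∂μ) ^ (1 / 2 : ℝ)) ^ 2 := pow_le_pow_left' holder 2
    _ = μ s * ∫⁻ x in s, f x ^ 2 ∂μ := by
      simp only [mul_pow, sq_rpow_half, ENNReal.rpow_two, one_pow, lintegral_const,
        Measure.restrict_apply_univ, one_mul, mul_comm]

lemma sq_sum_measure_le_measure_biUnion_mul_sum_measure_inter {E : ι → Set X}
    (hE : ∀ i, MeasurableSet (E i)) (F : Finset ι) :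
    (∑ i ∈ F, μ (E i)) ^ 2 ≤ μ (⋃ i ∈ F, E i) * ∑ i ∈ F, ∑ j ∈ F, μ (E i ∩ E j) := by
  set U := ⋃ i ∈ F, E i
  set f : X → ℝ≥0∞ := fun x => ∑ i ∈ F, (E i).indicator 1 x
  have hf : Measurable f := Finset.measurable_sum _ fun i _ => measurable_one.indicator (hE i)
  have hsum : ∫⁻ x in U, f x ∂μ = ∑ i ∈ F, μ (E i) := by
    rw [lintegral_finsetSum _ fun i _ => measurable_one.indicator (hE i)]
    refine Finset.sum_congr rfl fun i hi => ?_
    rw [lintegral_indicator_one (hE i), Measure.restrict_apply (hE i),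
      inter_eq_left.2 (subset_iUnion₂ (s := fun i (_ : i ∈ F) => E i) i hi)]
  have hsq : ∫⁻ x, f x ^ 2 ∂μ = ∑ i ∈ F, ∑ j ∈ F, μ (E i ∩ E j) := by
    have indicator_mul (i j : ι) (x : X) : (E i).indicator 1 x * (E j).indicator 1 x =
        (E i ∩ E j).indicator (1 : X → ℝ≥0∞) x := by simp [inter_indicator_one]
    simp only [f, sq, Finset.sum_mul_sum, indicator_mul]
    rw [lintegral_finsetSum _ fun i _ => Finset.measurable_sum _ fun j _ =>
      measurable_one.indicator ((hE i).inter (hE j))]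
    refine Finset.sum_congr rfl fun i _ => ?_
    rw [lintegral_finsetSum _ fun j _ => measurable_one.indicator ((hE i).inter (hE j))]
    exact Finset.sum_congr rfl fun j _ => lintegral_indicator_one ((hE i).inter (hE j))
  calc (∑ i ∈ F, μ (E i)) ^ 2 = (∫⁻ x in U, f x ∂μ) ^ 2 := by rw [hsum]
    _ ≤ μ U * ∫⁻ x in U, f x ^ 2 ∂μ :=
      sq_setLIntegral_le_measure_mul_setLIntegral_sq μ U hf.aemeasurable
    _ ≤ μ U * ∑ i ∈ F, ∑ j ∈ F, μ (E i ∩ E j) := by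
      rw [← hsq]; gcongr; exact Measure.restrict_le_self

lemma sq_sum_measure_tsub_le_measure_mul_sum_measure_inter [DecidableEq ι] {E : ι → Set X}
    (hE : ∀ i, MeasurableSet (E i)) {F K : Finset ι} (hKF : K ⊆ F) {T : Set X}
    (hT : ∀ i ∈ F \ K, E i ⊆ T) :
    (∑ i ∈ F, μ (E i) - ∑ i ∈ K, μ (E i)) ^ 2 ≤ μ T * ∑ i ∈ F, ∑ j ∈ F, μ (E i ∩ E j) := by
  calc (∑ i ∈ F, μ (E i) - ∑ i ∈ K, μ (E i)) ^ 2 ≤ (∑ i ∈ F \ K, μ (E i)) ^ 2 := by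
        gcongr
        exact tsub_le_iff_right.2 (Finset.sum_sdiff hKF).ge
    _ ≤ μ (⋃ i ∈ F \ K, E i) * ∑ i ∈ F \ K, ∑ j ∈ F \ K, μ (E i ∩ E j) :=
      sq_sum_measure_le_measure_biUnion_mul_sum_measure_inter μ hE _
    _ ≤ μ T * ∑ i ∈ F, ∑ j ∈ F, μ (E i ∩ E j) := by
      have hFK : F \ K ⊆ F := Finset.sdiff_subset
      gcongr ?_ * ?_
      · exact measure_mono (iUnion₂_subset hT)
      · exact (Finset.sum_le_sum fun i _ => Finset.sum_le_sum_of_subset hFK).trans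
          (Finset.sum_le_sum_of_subset hFK)

lemma le_measure_limsup_atTop [IsFiniteMeasure μ] {E : ℕ → Set X} (hE : ∀ i, MeasurableSet (E i))
    {c : ℝ≥0∞} (hc : ∀ n, c ≤ μ (⋃ i ≥ n, E i)) : c ≤ μ (limsup E atTop) := by
  rw [limsup_eq_iInf_iSup_of_nat]
  simp only [iInf_eq_iInter, iSup_eq_iUnion]
  refine ge_of_tendsto' (tendsto_measure_iInter_atTop (fun n => ?_) ?_ ⟨0, measure_ne_top μ _⟩) hc
  · exact (MeasurableSet.biUnion (to_countable _) fun i _ => hE i).nullMeasurableSet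
  · exact fun m n hmn => biUnion_subset_biUnion_left fun i (hi : n ≤ i) => hmn.trans hi

end Measure

lemma one_le_of_frequently_sq_sub_le_mul_sq {α : Type*} {l : Filter α} {u : α → ℝ} {b c : ℝ}
    (hu : Tendsto u l atTop) (h : ∃ᶠ x in l, (u x - b) ^ 2 ≤ c * u x ^ 2) : 1 ≤ c := by
  have hlim : Tendsto (fun x => (1 - b / u x) ^ 2) l (𝓝 1) := by
    simpa using ((tendsto_const_nhds.div_atTop hu).const_sub 1).pow 2
  refine le_of_tendsto_of_frequently hlim ((h.and_eventually (hu.eventually_gt_atTop 0)).mono ?_)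
  rintro x ⟨hx, hpos⟩
  rwa [one_sub_div hpos.ne', div_pow, div_le_iff₀ (by positivity)]

lemma ENNReal.one_le_of_frequently_sq_tsub_le_mul_sq {α : Type*} {l : Filter α} {a : α → ℝ≥0∞}
    {b c : ℝ≥0∞} (ha : Tendsto a l (𝓝 ∞)) (ha_ne : ∀ x, a x ≠ ∞) (hb : b ≠ ∞)
    (h : ∃ᶠ x in l, (a x - b) ^ 2 ≤ c * a x ^ 2) : 1 ≤ c := by
  rcases eq_or_ne c ∞ with rfl | hc
  · exact le_top
  have hu : Tendsto (fun x => (a x).toReal) l atTop :=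
    ENNReal.tendsto_ofReal_nhds_top.1 (by simpa only [ENNReal.ofReal_toReal (ha_ne _)] using ha)
  rw [← ENNReal.ofReal_one, ENNReal.ofReal_le_iff_le_toReal hc]
  refine one_le_of_frequently_sq_sub_le_mul_sq hu (b := b.toReal) <|
    (h.and_eventually (ha.eventually (lt_mem_nhds hb.lt_top))).mono ?_
  rintro x ⟨hx, hbx⟩
  have := ENNReal.toReal_mono (ENNReal.mul_ne_top hc (ENNReal.pow_ne_top (ha_ne x))) hx
  rwa [ENNReal.toReal_pow, ENNReal.toReal_sub_of_le hbx.le (ha_ne x), ENNReal.toReal_mul,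
    ENNReal.toReal_pow] at this

lemma ENNReal.tendsto_sum_Icc_one_nhds_top {f : ℕ → ℝ≥0∞} (hf : ∑' n, f n = ∞) (hf0 : f 0 ≠ ∞) :
    Tendsto (fun Q => ∑ i ∈ Finset.Icc 1 Q, f i) atTop (𝓝 ∞) := by
  have := ENNReal.tendsto_nat_tsum (fun i => f (i + 1))
  rw [ENNReal.tsum_add_one_eq_top hf hf0] at this
  refine this.congr fun Q => ?_
  rw [← Finset.Ico_add_one_right_eq_Icc, Finset.sum_Ico_eq_sum_range]
  simp [add_comm]

theorem refined_divergence_borel_cantelli {X : Type*} [MeasurableSpace X]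
    (μ : Measure X) [IsProbabilityMeasure μ] (E : ℕ → Set X)
    (hmeas : ∀ i, MeasurableSet (E i))
    (hdiv : ∑' i, μ (E i) = ⊤)
    (C : ℝ) (hC : 0 < C)
    (hquasi : {Q : ℕ | ∑ s ∈ Finset.Icc 1 Q, ∑ t ∈ Finset.Icc 1 Q, μ (E s ∩ E t) ≤
        ENNReal.ofReal C * (∑ s ∈ Finset.Icc 1 Q, μ (E s)) ^ 2}.Infinite) :
    μ {x | {i : ℕ | x ∈ E i}.Infinite} ≥ ENNReal.ofReal (1 / C) := by
  set A : ℕ → ℝ≥0∞ := fun Q => ∑ s ∈ Finset.Icc 1 Q, μ (E s)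
  have hA_ne (Q : ℕ) : A Q ≠ ∞ := ENNReal.sum_ne_top.2 fun _ _ => measure_ne_top μ _
  have hA : Tendsto A atTop (𝓝 ∞) := ENNReal.tendsto_sum_Icc_one_nhds_top hdiv (measure_ne_top μ _)
  have hlimsup : {x | {i : ℕ | x ∈ E i}.Infinite} = limsup E atTop := by
    ext x
    simp [mem_limsup_iff_frequently_mem, Nat.frequently_atTop_iff_infinite]
  rw [ge_iff_le, hlimsup]
  refine le_measure_limsup_atTop μ hmeas fun n => ?_
  set T := ⋃ i ≥ n, E i
  have hfreq : ∃ᶠ Q in atTop, (A Q - A n) ^ 2 ≤ μ T * ENNReal.ofReal C * A Q ^ 2 := by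
    refine ((Nat.frequently_atTop_iff_infinite.2 hquasi).and_eventually
      (eventually_ge_atTop n)).mono ?_
    rintro Q ⟨hQ, hnQ⟩
    calc (A Q - A n) ^ 2 ≤ μ T * ∑ s ∈ Finset.Icc 1 Q, ∑ t ∈ Finset.Icc 1 Q, μ (E s ∩ E t) := by
          refine sq_sum_measure_tsub_le_measure_mul_sum_measure_inter μ hmeas
            (Finset.Icc_subset_Icc_right hnQ) fun i hi => ?_
          simp only [Finset.mem_sdiff, Finset.mem_Icc, not_and, not_le] at hi
          exact subset_biUnion_of_mem (u := E) (hi.2 hi.1.1).le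
      _ ≤ μ T * ENNReal.ofReal C * A Q ^ 2 := by rw [mul_assoc]; gcongr
  have hCT := ENNReal.one_le_of_frequently_sq_tsub_le_mul_sq hA hA_ne (hA_ne n) hfreq
  rwa [one_div, ENNReal.ofReal_inv_of_pos hC, ENNReal.inv_le_iff_le_mul (by simp) (by simp),
    mul_comm]
end

section
/- For all real numbers x, t ≥ 1 and every real c, the number of positive integers n ≤ x such that ∑_{p | n, p ≥ t} 1/p ≥ c is at most K·x·e^{-100·c·t} for some absolute constant K, where the sum is over prime divisors p of n with p ≥ t. -/
/-!
Rankin's trick with `λ = 100 t`: writing `f n = ∑_{p ∣ n, p ≥ t} 1/p`, the count is at most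
`e^{-λc} ∑_{n ≤ x} e^{λ f n}`. Put `e^{λ/p} = 1 + h p`; expanding `∏_{p ∣ n, p ≥ t} (1 + h p)` over
squarefree divisors and summing over `n ≤ x` first bounds the sum by `x ∏_{t ≤ p ≤ x} (1 + h p / p)`.
Since `h p ≤ (λ/p) e^{λ/t}` for `p ≥ t` and `∑_{p ≥ t} 1/p² ≤ 2/t`, this Euler product is at most
`exp (2 λ e^{λ/t} / t) = exp (200 e^{100})`.
-/

open Finset Real

lemma Real.exp_sub_one_le_mul_exp (y : ℝ) : exp y - 1 ≤ y * exp y := by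
  have h := mul_le_mul_of_nonneg_right (add_one_le_exp (-y)) (exp_pos y).le
  rw [← exp_add, neg_add_cancel, exp_zero] at h
  linarith

lemma sum_inv_sq_le_two_div {s : Finset ℕ} {t : ℝ} (ht : 0 < t) (hs : ∀ k ∈ s, t ≤ k) :
    ∑ k ∈ s, ((k : ℝ) ^ 2)⁻¹ ≤ 2 / t := by
  have hceil : 1 ≤ ⌈t⌉₊ := Nat.one_le_ceil_iff.2 ht
  have hsub : s ⊆ Ioo (⌈t⌉₊ - 1) (s.sup id + 1) := fun k hk =>
    mem_Ioo.2 ⟨by have := Nat.ceil_le.2 (hs k hk); omega, Nat.lt_succ_of_le (le_sup (f := id) hk)⟩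
  calc ∑ k ∈ s, ((k : ℝ) ^ 2)⁻¹
      ≤ ∑ k ∈ Ioo (⌈t⌉₊ - 1) (s.sup id + 1), ((k : ℝ) ^ 2)⁻¹ :=
        sum_le_sum_of_subset_of_nonneg hsub fun _ _ _ => by positivity
    _ ≤ 2 / ((⌈t⌉₊ - 1 : ℕ) + 1) := sum_Ioo_inv_sq_le _ _
    _ = 2 / ⌈t⌉₊ := by rw [Nat.cast_sub hceil, Nat.cast_one, sub_add_cancel]
    _ ≤ 2 / t := by gcongr; exact Nat.le_ceil t

lemma prod_one_add_exp_div_sub_one_div_le {P : Finset ℕ} {t l : ℝ} (ht : 0 < t) (hl : 0 ≤ l)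
    (hP : ∀ p ∈ P, t ≤ p) :
    ∏ p ∈ P, (1 + (exp (l / p) - 1) / p) ≤ exp (2 * l * exp (l / t) / t) := by
  have hterm : ∀ p ∈ P, (exp (l / p) - 1) / p ≤ l * exp (l / t) * ((p : ℝ) ^ 2)⁻¹ := by
    intro p hp
    have hp0 : (0 : ℝ) < p := ht.trans_le (hP p hp)
    calc (exp (l / p) - 1) / p ≤ l / p * exp (l / p) / p := by
          gcongr; exact exp_sub_one_le_mul_exp _
      _ ≤ l / p * exp (l / t) / p := by
          gcongr; exact hP p hp
      _ = l * exp (l / t) * ((p : ℝ) ^ 2)⁻¹ := by field_simp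
  calc ∏ p ∈ P, (1 + (exp (l / p) - 1) / p)
      ≤ ∏ p ∈ P, exp ((exp (l / p) - 1) / p) := by
        refine prod_le_prod (fun p hp => ?_) fun p _ => by rw [add_comm]; exact add_one_le_exp _
        have hp0 : (0 : ℝ) < p := ht.trans_le (hP p hp)
        have : 1 ≤ exp (l / p) := one_le_exp (by positivity)
        positivity
    _ = exp (∑ p ∈ P, (exp (l / p) - 1) / p) := (exp_sum _ _).symm
    _ ≤ exp (2 * l * exp (l / t) / t) := by
        gcongr
        calc ∑ p ∈ P, (exp (l / p) - 1) / p
            ≤ ∑ p ∈ P, l * exp (l / t) * ((p : ℝ) ^ 2)⁻¹ := sum_le_sum hterm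
          _ = l * exp (l / t) * ∑ p ∈ P, ((p : ℝ) ^ 2)⁻¹ := (mul_sum _ _ _).symm
          _ ≤ l * exp (l / t) * (2 / t) := by gcongr; exact sum_inv_sq_le_two_div ht hP
          _ = 2 * l * exp (l / t) / t := by ring

lemma card_filter_le_le_exp_mul_sum_exp {α : Type*} (s : Finset α) (f : α → ℝ) (c : ℝ) {l : ℝ}
    (hl : 0 ≤ l) : (#{a ∈ s | c ≤ f a} : ℝ) ≤ exp (-l * c) * ∑ a ∈ s, exp (l * f a) := by
  rw [mul_sum, card_eq_sum_ones, Nat.cast_sum, Nat.cast_one, sum_filter]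
  refine sum_le_sum fun a _ => ?_
  split_ifs with h
  · rw [← exp_add]
    exact one_le_exp (by nlinarith)
  · positivity

lemma powerset_filter_dvd {P : Finset ℕ} (hP : ∀ p ∈ P, p.Prime) (n : ℕ) :
    {p ∈ P | p ∣ n}.powerset = {D ∈ P.powerset | ∏ p ∈ D, p ∣ n} := by
  ext D
  simp only [mem_powerset, mem_filter]
  constructor
  · intro h
    exact ⟨h.trans (filter_subset _ _), prod_primes_dvd n
      (fun p hp => (hP p (mem_filter.1 (h hp)).1).prime) fun p hp => (mem_filter.1 (h hp)).2⟩
  · rintro ⟨hDP, hdvd⟩ p hp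
    exact mem_filter.2 ⟨hDP hp, (dvd_prod_of_mem _ hp).trans hdvd⟩

lemma sum_Ioc_prod_filter_dvd_one_add_le {P : Finset ℕ} (hP : ∀ p ∈ P, p.Prime) {g : ℕ → ℝ}
    (hg : ∀ p ∈ P, 0 ≤ g p) (N : ℕ) :
    ∑ n ∈ Ioc 0 N, ∏ p ∈ P with p ∣ n, (1 + g p) ≤ N * ∏ p ∈ P, (1 + g p / p) := by
  calc ∑ n ∈ Ioc 0 N, ∏ p ∈ P with p ∣ n, (1 + g p)
      = ∑ D ∈ P.powerset, (∏ p ∈ D, g p) * #{n ∈ Ioc 0 N | ∏ p ∈ D, p ∣ n} := by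
        simp_rw [prod_one_add, powerset_filter_dvd hP, sum_filter]
        rw [sum_comm]
        refine sum_congr rfl fun D _ => ?_
        rw [← sum_filter, sum_const, nsmul_eq_mul, mul_comm]
    _ ≤ ∑ D ∈ P.powerset, (∏ p ∈ D, g p) * (N / ∏ p ∈ D, (p : ℝ)) := by
        gcongr with D hD
        · exact prod_nonneg fun p hp => hg p (mem_powerset.1 hD hp)
        · rw [Nat.Ioc_filter_dvd_card_eq_div, ← Nat.cast_prod]
          exact Nat.cast_div_le
    _ = N * ∏ p ∈ P, (1 + g p / p) := by
        rw [prod_one_add, mul_sum]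
        refine sum_congr rfl fun D _ => ?_
        rw [prod_div_distrib]
        ring

lemma primeFactors_filter_le_eq {n N : ℕ} (hn : n ∈ Ioc 0 N) (t : ℝ) :
    n.primeFactors.filter (fun p : ℕ => t ≤ (p : ℝ)) = {p ∈ {p ∈ Icc ⌈t⌉₊ N | p.Prime} | p ∣ n} := by
  rw [mem_Ioc] at hn
  ext p
  simp only [mem_filter, Nat.mem_primeFactors, mem_Icc, Nat.ceil_le]
  constructor
  · rintro ⟨⟨hp, hpn, -⟩, htp⟩
    exact ⟨⟨⟨htp, (Nat.le_of_dvd hn.1 hpn).trans hn.2⟩, hp⟩, hpn⟩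
  · rintro ⟨⟨⟨htp, -⟩, hp⟩, hpn⟩
    exact ⟨⟨hp, hpn, hn.1.ne'⟩, htp⟩

lemma sum_Ioc_exp_mul_sum_primeFactors_inv_le (N : ℕ) {t l : ℝ} (ht : 0 < t) (hl : 0 ≤ l) :
    ∑ n ∈ Ioc 0 N, exp (l * ∑ p ∈ n.primeFactors.filter (fun p : ℕ => t ≤ (p : ℝ)), (1 / (p : ℝ))) ≤
      N * exp (2 * l * exp (l / t) / t) := by
  set P := {p ∈ Icc ⌈t⌉₊ N | p.Prime}
  have hP : ∀ p ∈ P, p.Prime := fun p hp => (mem_filter.1 hp).2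
  have htP : ∀ p ∈ P, t ≤ p := fun p hp => Nat.ceil_le.1 (mem_Icc.1 (mem_filter.1 hp).1).1
  have hg : ∀ p : ℕ, 0 ≤ exp (l / p) - 1 := fun p => sub_nonneg.2 (one_le_exp (by positivity))
  calc ∑ n ∈ Ioc 0 N, exp (l * ∑ p ∈ n.primeFactors.filter (fun p : ℕ => t ≤ (p : ℝ)), (1 / (p : ℝ)))
      = ∑ n ∈ Ioc 0 N, ∏ p ∈ P with p ∣ n, (1 + (exp (l / p) - 1)) := by
        refine sum_congr rfl fun n hn => ?_
        rw [primeFactors_filter_le_eq hn, mul_sum, exp_sum]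
        exact prod_congr rfl fun p _ => by rw [add_sub_cancel, mul_one_div]
    _ ≤ N * ∏ p ∈ P, (1 + (exp (l / p) - 1) / p) :=
        sum_Ioc_prod_filter_dvd_one_add_le hP (fun p _ => hg p) N
    _ ≤ N * exp (2 * l * exp (l / t) / t) := by
        gcongr
        exact prod_one_add_exp_div_sub_one_div_le ht hl htP

lemma setOf_one_le_le_and_eq {x : ℝ} (hx : 0 ≤ x) (Q : ℕ → Prop) [DecidablePred Q] :
    {n : ℕ | 1 ≤ n ∧ (n : ℝ) ≤ x ∧ Q n} = ↑{n ∈ Ioc 0 ⌊x⌋₊ | Q n} := by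
  ext n
  simp only [Set.mem_ofPred_eq, coe_filter, mem_Ioc, Nat.le_floor_iff hx, Nat.one_le_iff_ne_zero,
    Nat.pos_iff_ne_zero, and_assoc]

theorem unweighted_anatomy :
    ∃ K : ℝ, 0 < K ∧ ∀ (x t : ℝ), 1 ≤ x → 1 ≤ t → ∀ c : ℝ,
      (Nat.card {n : ℕ | 1 ≤ n ∧ (n : ℝ) ≤ x ∧
          c ≤ ∑ p ∈ n.primeFactors.filter (fun p : ℕ => t ≤ (p : ℝ)), (1 / (p : ℝ))} : ℝ) ≤
        K * x * Real.exp (-100 * c * t) := by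
  refine ⟨exp (200 * exp 100), exp_pos _, fun x t hx ht c => ?_⟩
  have ht0 : 0 < t := by linarith
  rw [setOf_one_le_le_and_eq (by linarith), Nat.card_coe_set_eq, Set.ncard_coe_finset]
  calc _ ≤ exp (-(100 * t) * c) * ∑ n ∈ Ioc 0 ⌊x⌋₊,
          exp (100 * t * ∑ p ∈ n.primeFactors.filter (fun p : ℕ => t ≤ (p : ℝ)), (1 / (p : ℝ))) :=
        card_filter_le_le_exp_mul_sum_exp _ _ _ (by positivity)
    _ ≤ exp (-(100 * t) * c) * (⌊x⌋₊ * exp (2 * (100 * t) * exp (100 * t / t) / t)) := by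
        gcongr
        exact sum_Ioc_exp_mul_sum_primeFactors_inv_le _ ht0 (by positivity)
    _ ≤ exp (-(100 * t) * c) * (x * exp (2 * (100 * t) * exp (100 * t / t) / t)) := by
        gcongr
        exact Nat.floor_le (by linarith)
    _ = exp (200 * exp 100) * x * exp (-100 * c * t) := by
        field_simp
        ring_nf
end

section
/- Let q, r be distinct squarefree positive integers, let N be any positive integer, and set v⁻ = N/gcd(N,q), v⁺ = q/gcd(N,q), w⁻ = N/gcd(N,r), w⁺ = r/gcd(N,r). Suppose that for every prime p, |ν_p(q/N)| + |ν_p(r/N)| ≤ 1, where ν_p denotes the p-adic valuation on rationals. Then v⁻, v⁺, w⁻, w⁺ are pairwise coprime, q = N·v⁺/v⁻, r = N·w⁺/w⁻, and qr/gcd(q,r)² = v⁻·v⁺·w⁻·w⁺. -/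
/-!
Fix a prime `p` and write `a, b, n` for the exponents of `p` in `q, r, N`. The exponents of `p` in
`v⁻, v⁺, w⁻, w⁺` are the truncated differences `n - a, a - n, n - b, b - n`, whose sum is
`|a - n| + |b - n| ≤ 1`; so `p` divides at most one of the four numbers, which gives pairwise
coprimality. The same bound forces `n = a` or `n = b`, hence `min n a + min n b = n + min a b`,
i.e. `gcd N q * gcd N r = N * gcd q r`; multiplying out `v⁻ v⁺ gcd N q ^ 2 = N q` and its analogue
for `r` turns this into the formula for `q r`.
-/

namespace Nat

theorem div_gcd_ne_zero_left {m : ℕ} (k : ℕ) (hm : m ≠ 0) : m / gcd m k ≠ 0 :=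
  (Nat.div_pos (gcd_le_left k (pos_of_ne_zero hm)) (gcd_pos_of_pos_left k (pos_of_ne_zero hm))).ne'

theorem div_gcd_ne_zero_right (m : ℕ) {k : ℕ} (hk : k ≠ 0) : k / gcd m k ≠ 0 := by
  simpa only [gcd_comm] using div_gcd_ne_zero_left m hk

theorem mul_div_gcd_comm (m k : ℕ) : k * (m / gcd m k) = m * (k / gcd m k) := by
  rw [← Nat.mul_div_assoc k (gcd_dvd_left m k), ← Nat.mul_div_assoc m (gcd_dvd_right m k),
    mul_comm]

theorem div_gcd_mul_div_gcd_mul_gcd_sq (m k : ℕ) :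
    m / gcd m k * (k / gcd m k) * gcd m k ^ 2 = m * k := by
  rw [sq, mul_mul_mul_comm, Nat.div_mul_cancel (gcd_dvd_left m k),
    Nat.div_mul_cancel (gcd_dvd_right m k)]

theorem factorization_div_gcd_left {m k : ℕ} (hm : m ≠ 0) (hk : k ≠ 0) :
    (m / gcd m k).factorization = m.factorization - k.factorization := by
  ext p
  simp only [factorization_div (gcd_dvd_left m k), factorization_gcd hm hk, Finsupp.tsub_apply,
    Finsupp.inf_apply]
  omega

theorem factorization_div_gcd_right {m k : ℕ} (hm : m ≠ 0) (hk : k ≠ 0) :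
    (k / gcd m k).factorization = k.factorization - m.factorization := by
  rw [gcd_comm, factorization_div_gcd_left hk hm]

theorem coprime_of_factorization_min_eq_zero {a b : ℕ} (ha : a ≠ 0) (hb : b ≠ 0)
    (h : ∀ p, min (a.factorization p) (b.factorization p) = 0) : Coprime a b := by
  refine coprime_of_dvd fun p hp hpa hpb => ?_
  rw [hp.dvd_iff_one_le_factorization ha] at hpa
  rw [hp.dvd_iff_one_le_factorization hb] at hpb
  have := h p
  omega

theorem mul_eq_of_gcd_mul_gcd_eq_mul_gcd {n m k : ℕ} (hn : n ≠ 0)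
    (h : gcd n m * gcd n k = n * gcd m k) :
    m * k = n / gcd n m * (m / gcd n m) * (n / gcd n k) * (k / gcd n k) * gcd m k ^ 2 := by
  refine Nat.eq_of_mul_eq_mul_left (pos_of_ne_zero (pow_ne_zero 2 hn)) ?_
  calc n ^ 2 * (m * k) = (n * m) * (n * k) := by ring
    _ = (n / gcd n m * (m / gcd n m) * gcd n m ^ 2)
          * (n / gcd n k * (k / gcd n k) * gcd n k ^ 2) := by
      rw [div_gcd_mul_div_gcd_mul_gcd_sq, div_gcd_mul_div_gcd_mul_gcd_sq]
    _ = n / gcd n m * (m / gcd n m) * (n / gcd n k) * (k / gcd n k)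
          * (gcd n m * gcd n k) ^ 2 := by ring
    _ = n ^ 2 * (n / gcd n m * (m / gcd n m) * (n / gcd n k) * (k / gcd n k) * gcd m k ^ 2) := by
      rw [h]; ring

end Nat

theorem padicValRat_natCast_div {p m n : ℕ} [Fact p.Prime] (hm : m ≠ 0) (hn : n ≠ 0) :
    padicValRat p ((m : ℚ) / n) = m.factorization p - n.factorization p := by
  rw [padicValRat.div (by exact_mod_cast hm) (by exact_mod_cast hn), padicValRat.of_nat,
    padicValRat.of_nat, Nat.factorization_def m Fact.out, Nat.factorization_def n Fact.out]

theorem natAbs_factorization_sub_add_le_one {q r N : ℕ} (hq : q ≠ 0) (hr : r ≠ 0) (hN : N ≠ 0)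
    (hval : ∀ p : ℕ, p.Prime →
      |padicValRat p ((q : ℚ) / N)| + |padicValRat p ((r : ℚ) / N)| ≤ 1) (p : ℕ) :
    ((q.factorization p : ℤ) - N.factorization p).natAbs
      + ((r.factorization p : ℤ) - N.factorization p).natAbs ≤ 1 := by
  by_cases hp : p.Prime
  · have := Fact.mk hp
    have h := hval p hp
    rw [padicValRat_natCast_div hq hN, padicValRat_natCast_div hr hN, Int.abs_eq_natAbs,
      Int.abs_eq_natAbs] at h
    exact_mod_cast h
  · simp [Nat.factorization_eq_zero_of_not_prime _ hp]

theorem padic_structure_lemma_general (q r N : ℕ) (hq : 0 < q) (hr : 0 < r) (hN : 0 < N)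
    (hval : ∀ p : ℕ, p.Prime →
      |padicValRat p ((q : ℚ) / N)| + |padicValRat p ((r : ℚ) / N)| ≤ 1) :
    (Nat.Coprime (N / Nat.gcd N q) (q / Nat.gcd N q) ∧
     Nat.Coprime (N / Nat.gcd N q) (N / Nat.gcd N r) ∧
     Nat.Coprime (N / Nat.gcd N q) (r / Nat.gcd N r) ∧
     Nat.Coprime (q / Nat.gcd N q) (N / Nat.gcd N r) ∧
     Nat.Coprime (q / Nat.gcd N q) (r / Nat.gcd N r) ∧
     Nat.Coprime (N / Nat.gcd N r) (r / Nat.gcd N r)) ∧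
    q * (N / Nat.gcd N q) = N * (q / Nat.gcd N q) ∧
    r * (N / Nat.gcd N r) = N * (r / Nat.gcd N r) ∧
    q * r = (N / Nat.gcd N q) * (q / Nat.gcd N q) * (N / Nat.gcd N r) * (r / Nat.gcd N r)
      * (Nat.gcd q r) ^ 2 := by
  have hloc := natAbs_factorization_sub_add_le_one hq.ne' hr.ne' hN.ne' hval
  have hgcd : Nat.gcd N q * Nat.gcd N r = N * Nat.gcd q r := by
    refine Nat.eq_of_factorization_eq (by positivity) (by positivity) fun p => ?_
    rw [Nat.factorization_mul (by positivity) (by positivity),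
      Nat.factorization_mul hN.ne' (by positivity)]
    simp only [Nat.factorization_gcd hN.ne' hq.ne', Nat.factorization_gcd hN.ne' hr.ne',
      Nat.factorization_gcd hq.ne' hr.ne', Finsupp.add_apply, Finsupp.inf_apply]
    have := hloc p
    omega
  have hvm := Nat.div_gcd_ne_zero_left q hN.ne'
  have hvp := Nat.div_gcd_ne_zero_right N hq.ne'
  have hwm := Nat.div_gcd_ne_zero_left r hN.ne'
  have hwp := Nat.div_gcd_ne_zero_right N hr.ne'
  refine ⟨⟨?_, ?_, ?_, ?_, ?_, ?_⟩, Nat.mul_div_gcd_comm N q, Nat.mul_div_gcd_comm N r,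
    Nat.mul_eq_of_gcd_mul_gcd_eq_mul_gcd hN.ne' hgcd⟩ <;>
    refine Nat.coprime_of_factorization_min_eq_zero ‹_› ‹_› fun p => ?_ <;>
    simp only [Nat.factorization_div_gcd_left hN.ne' hq.ne',
      Nat.factorization_div_gcd_right hN.ne' hq.ne', Nat.factorization_div_gcd_left hN.ne' hr.ne',
      Nat.factorization_div_gcd_right hN.ne' hr.ne', Finsupp.tsub_apply] <;>
    have := hloc p <;> omega

theorem padic_structure_lemma (q r N : ℕ) (hq : 0 < q) (hr : 0 < r) (hN : 0 < N)
    (hsq : Squarefree q) (hsr : Squarefree r) (hqr : q ≠ r)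
    (hval : ∀ p : ℕ, p.Prime →
      |padicValRat p ((q : ℚ) / N)| + |padicValRat p ((r : ℚ) / N)| ≤ 1) :
    (Nat.Coprime (N / Nat.gcd N q) (q / Nat.gcd N q) ∧
     Nat.Coprime (N / Nat.gcd N q) (N / Nat.gcd N r) ∧
     Nat.Coprime (N / Nat.gcd N q) (r / Nat.gcd N r) ∧
     Nat.Coprime (q / Nat.gcd N q) (N / Nat.gcd N r) ∧
     Nat.Coprime (q / Nat.gcd N q) (r / Nat.gcd N r) ∧
     Nat.Coprime (N / Nat.gcd N r) (r / Nat.gcd N r)) ∧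
    q * (N / Nat.gcd N q) = N * (q / Nat.gcd N q) ∧
    r * (N / Nat.gcd N r) = N * (r / Nat.gcd N r) ∧
    q * r = (N / Nat.gcd N q) * (q / Nat.gcd N q) * (N / Nat.gcd N r) * (r / Nat.gcd N r)
      * (Nat.gcd q r) ^ 2 :=
  padic_structure_lemma_general q r N hq hr hN hval
end

section
/- Let μ be a Borel probability measure on a metric space, and suppose (E_i) are measurable sets such that there exist constants c, C > 0 and finite sets S_k ⊆ ℕ with min S_k → ∞, ∑_{i ∈ S_k} μ(E_i) ≥ c, and ∑_{s<t, s,t ∈ S_k} μ(E_s ∩ E_t) ≤ C·(∑_{i ∈ S_k} μ(E_i))². Then μ(limsup_i E_i) ≥ c'/C' for some constants c', C' > 0 depending only on c, C (in particular the limsup set has positive measure). -/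
/-!
For `f = ∑ i ∈ S, 𝟙_{E i}`, Cauchy–Schwarz on the support `⋃ i ∈ S, E i` of `f` gives the
Chung–Erdős inequality `(∑ μ (E i))² ≤ μ (⋃ E i) * ∑ s, ∑ t, μ (E s ∩ E t)`. Splitting the double
sum into its diagonal and twice its upper triangle, the hypotheses bound it by
`(c⁻¹ + 2 C) (∑ μ (E i))²`, so each `⋃ i ∈ S k, E i` has measure at least `(c⁻¹ + 2 C)⁻¹`.
As `min S k → ∞`, the same bound holds for every tail union `⋃ i ≥ m, E i`, and continuity
from above passes it on to the limsup set.
-/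

open MeasureTheory Filter
open scoped ENNReal

theorem Finset.sum_sum_eq_sum_add_two_mul_sum_lt {ι R : Type*} [LinearOrder ι] [CommSemiring R]
    (S : Finset ι) {g : ι → ι → R} (hg : ∀ s t, g s t = g t s) :
    ∑ s ∈ S, ∑ t ∈ S, g s t = ∑ s ∈ S, g s s + 2 * ∑ s ∈ S, ∑ t ∈ S with s < t, g s t := by
  have h_split : ∀ s t, g s t = (if s < t then g s t else 0) + (if t < s then g t s else 0)
      + (if s = t then g s t else 0) := fun s t ↦ by
    rcases lt_trichotomy s t with h | rfl | h
    · simp [h, h.ne, h.not_gt]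
    · simp
    · simp [h, h.ne', h.not_gt, hg s t]
  have h_swap : ∑ s ∈ S, ∑ t ∈ S, (if t < s then g t s else 0)
      = ∑ s ∈ S, ∑ t ∈ S, (if s < t then g s t else 0) := Finset.sum_comm
  simp_rw [← Finset.sum_filter] at h_swap
  conv_lhs => enter [2, s, 2, t]; rw [h_split s t]
  simp only [Finset.sum_add_distrib, Finset.sum_ite_eq, ← Finset.sum_filter, h_swap]
  rw [Finset.filter_mem_eq_inter, Finset.inter_self]
  ring

section ChungErdos

variable {X : Type*} [MeasurableSpace X] (μ : Measure X)

theorem sq_lintegral_le_measure_mul_lintegral_sq {f : X → ℝ≥0∞} (hf : AEMeasurable f μ)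
    {U : Set X} (hU : MeasurableSet U) (hfU : ∀ x ∉ U, f x = 0) :
    (∫⁻ x, f x ∂μ) ^ 2 ≤ μ U * ∫⁻ x, f x ^ 2 ∂μ := by
  have hf_eq : U.indicator 1 * f = f := by
    ext x
    by_cases hx : x ∈ U <;> simp [hx, hfU]
  have h_ind : ∀ x, U.indicator (1 : X → ℝ≥0∞) x ^ (2 : ℝ) = U.indicator 1 x := fun x ↦ by
    by_cases hx : x ∈ U <;> simp [hx]
  have holder := ENNReal.lintegral_mul_le_Lp_mul_Lq μ .two_two (f := U.indicator 1)
    (aemeasurable_one.indicator hU) hf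
  rw [hf_eq] at holder
  simp only [h_ind, lintegral_indicator_one hU,
    ← ENNReal.mul_rpow_of_nonneg _ _ (by norm_num : (0 : ℝ) ≤ 1 / 2)] at holder
  calc (∫⁻ x, f x ∂μ) ^ 2 ≤ ((μ U * ∫⁻ x, f x ^ (2 : ℝ) ∂μ) ^ (1 / 2 : ℝ)) ^ (2 : ℝ) := by
        rw [ENNReal.rpow_two]; gcongr
    _ = μ U * ∫⁻ x, f x ^ 2 ∂μ := by
      rw [← ENNReal.rpow_mul]; norm_num

theorem lintegral_sum_indicator_one {ι : Type*} {E : ι → Set X} (hE : ∀ i, MeasurableSet (E i))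
    (S : Finset ι) : ∫⁻ x, ∑ i ∈ S, (E i).indicator 1 x ∂μ = ∑ i ∈ S, μ (E i) := by
  rw [lintegral_finsetSum _ fun i _ ↦ measurable_one.indicator (hE i)]
  exact Finset.sum_congr rfl fun i _ ↦ lintegral_indicator_one (hE i)

theorem sq_sum_measure_le_measure_biUnion_mul_sum_sum_inter {ι : Type*} {E : ι → Set X}
    (hE : ∀ i, MeasurableSet (E i)) (S : Finset ι) :
    (∑ i ∈ S, μ (E i)) ^ 2 ≤ μ (⋃ i ∈ S, E i) * ∑ s ∈ S, ∑ t ∈ S, μ (E s ∩ E t) := by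
  set f : X → ℝ≥0∞ := fun x ↦ ∑ i ∈ S, (E i).indicator 1 x
  have hf_sq : ∀ x, f x ^ 2 = ∑ p ∈ S ×ˢ S, (E p.1 ∩ E p.2).indicator 1 x := fun x ↦ by
    simp only [f, sq, Finset.sum_mul_sum, ← Finset.sum_product', Set.inter_indicator_one,
      Pi.mul_apply]
  have hf_sq_int : ∫⁻ x, f x ^ 2 ∂μ = ∑ s ∈ S, ∑ t ∈ S, μ (E s ∩ E t) := by
    simp_rw [hf_sq]
    rw [lintegral_sum_indicator_one μ (E := fun p : ι × ι ↦ E p.1 ∩ E p.2)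
      (fun p ↦ (hE p.1).inter (hE p.2)), Finset.sum_product]
  have hf_supp : ∀ x ∉ ⋃ i ∈ S, E i, f x = 0 := fun x hx ↦
    Finset.sum_eq_zero fun i hi ↦ Set.indicator_of_notMem (fun h ↦ hx (Set.mem_biUnion hi h)) _
  rw [← lintegral_sum_indicator_one μ hE, ← hf_sq_int]
  exact sq_lintegral_le_measure_mul_lintegral_sq μ
    (Finset.measurable_sum _ fun i _ ↦ measurable_one.indicator (hE i)).aemeasurable
    (Finset.measurableSet_biUnion S fun i _ ↦ hE i) hf_supp

theorem le_measure_biUnion_of_sum_inter_le_mul_sq [IsFiniteMeasure μ] {ι : Type*}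
    [LinearOrder ι] {E : ι → Set X} (hE : ∀ i, MeasurableSet (E i)) (S : Finset ι)
    {c C : ℝ≥0∞} (hc : c ≠ 0) (h_sum : c ≤ ∑ i ∈ S, μ (E i))
    (h_pairs : ∑ s ∈ S, ∑ t ∈ S with s < t, μ (E s ∩ E t) ≤ C * (∑ i ∈ S, μ (E i)) ^ 2) :
    (c⁻¹ + 2 * C)⁻¹ ≤ μ (⋃ i ∈ S, E i) := by
  set T := ∑ i ∈ S, μ (E i)
  have hT_top : T ≠ ∞ := ENNReal.sum_ne_top.2 fun i _ ↦ measure_ne_top μ _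
  have hT_zero : T ≠ 0 := (lt_of_lt_of_le (pos_iff_ne_zero.2 hc) h_sum).ne'
  have hc_top : c ≠ ∞ := ne_top_of_le_ne_top hT_top h_sum
  have hT_le : T ≤ c⁻¹ * T ^ 2 := calc
    T = c⁻¹ * c * T := by rw [ENNReal.inv_mul_cancel hc hc_top, one_mul]
    _ ≤ c⁻¹ * T ^ 2 := by rw [mul_assoc, sq]; gcongr
  have h_inter : ∑ s ∈ S, ∑ t ∈ S, μ (E s ∩ E t) ≤ (c⁻¹ + 2 * C) * T ^ 2 := calc
    ∑ s ∈ S, ∑ t ∈ S, μ (E s ∩ E t)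
        = T + 2 * ∑ s ∈ S, ∑ t ∈ S with s < t, μ (E s ∩ E t) := by
      rw [Finset.sum_sum_eq_sum_add_two_mul_sum_lt S fun s t ↦ by rw [Set.inter_comm]]
      simp only [Set.inter_self, T]
    _ ≤ c⁻¹ * T ^ 2 + 2 * (C * T ^ 2) := by gcongr
    _ = (c⁻¹ + 2 * C) * T ^ 2 := by ring
  have h_one : 1 * T ^ 2 ≤ μ (⋃ i ∈ S, E i) * (c⁻¹ + 2 * C) * T ^ 2 := calc
    1 * T ^ 2 ≤ μ (⋃ i ∈ S, E i) * ∑ s ∈ S, ∑ t ∈ S, μ (E s ∩ E t) :=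
      (one_mul _).trans_le (sq_sum_measure_le_measure_biUnion_mul_sum_sum_inter μ hE S)
    _ ≤ μ (⋃ i ∈ S, E i) * (c⁻¹ + 2 * C) * T ^ 2 := by rw [mul_assoc]; gcongr
  rw [ENNReal.mul_le_mul_iff_left (pow_ne_zero 2 hT_zero) (ENNReal.pow_ne_top hT_top)] at h_one
  rw [← one_div]
  exact ENNReal.div_le_of_le_mul h_one

end ChungErdos

theorem le_measure_setOf_infinite_of_le_measure_iUnion_ge {X : Type*} [MeasurableSpace X]
    (μ : Measure X) [IsFiniteMeasure μ] {E : ℕ → Set X} (hE : ∀ i, MeasurableSet (E i))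
    {r : ℝ≥0∞} (h : ∀ m, r ≤ μ (⋃ i ≥ m, E i)) : r ≤ μ {x | {i | x ∈ E i}.Infinite} := by
  rw [← cofinite.limsup_set_eq, Nat.cofinite_eq_atTop, limsup_eq_iInf_iSup_of_nat]
  simp only [Set.iInf_eq_iInter, Set.iSup_eq_iUnion]
  rw [Antitone.measure_iInter]
  · exact le_iInf h
  · exact fun m n hmn ↦ Set.biUnion_mono (fun i (hi : n ≤ i) ↦ hmn.trans hi) fun _ _ ↦ le_rfl
  · exact fun m ↦ (MeasurableSet.biUnion (Set.to_countable _) fun i _ ↦ hE i).nullMeasurableSet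
  · exact ⟨0, measure_ne_top μ _⟩

theorem quasi_independence_positive_measure (c C : ℝ) (hc : 0 < c) (hC : 0 < C) :
    ∃ c' C' : ℝ, 0 < c' ∧ 0 < C' ∧
      ∀ (X : Type) [MetricSpace X] [MeasurableSpace X] [BorelSpace X]
        (μ : Measure X) [IsProbabilityMeasure μ] (E : ℕ → Set X)
        (S : ℕ → Finset ℕ),
        (∀ i, MeasurableSet (E i)) →
        (∀ m : ℕ, ∃ k₀ : ℕ, ∀ k ≥ k₀, ∀ i ∈ S k, m ≤ i) →
        (∀ k, ENNReal.ofReal c ≤ ∑ i ∈ S k, μ (E i)) →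
        (∀ k, ∑ s ∈ S k, ∑ t ∈ (S k).filter (fun t => s < t), μ (E s ∩ E t) ≤
            ENNReal.ofReal C * (∑ i ∈ S k, μ (E i)) ^ 2) →
        μ {x | {i : ℕ | x ∈ E i}.Infinite} ≥ ENNReal.ofReal (c' / C') := by
  refine ⟨1, c⁻¹ + 2 * C, one_pos, by positivity, ?_⟩
  intro X _ _ _ μ _ E S hE h_min h_sum h_pairs
  have h_bound : ENNReal.ofReal (1 / (c⁻¹ + 2 * C))
      = ((ENNReal.ofReal c)⁻¹ + 2 * ENNReal.ofReal C)⁻¹ := by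
    rw [one_div, ENNReal.ofReal_inv_of_pos (by positivity),
      ENNReal.ofReal_add (by positivity) (by positivity), ENNReal.ofReal_inv_of_pos hc,
      ENNReal.ofReal_mul zero_le_two, ENNReal.ofReal_ofNat]
  rw [ge_iff_le, h_bound]
  refine le_measure_setOf_infinite_of_le_measure_iUnion_ge μ hE fun m ↦ ?_
  obtain ⟨k, hk⟩ := h_min m
  calc _ ≤ μ (⋃ i ∈ S k, E i) := le_measure_biUnion_of_sum_inter_le_mul_sq μ hE (S k)
        (ENNReal.ofReal_pos.2 hc).ne' (h_sum k) (h_pairs k)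
    _ ≤ μ (⋃ i ≥ m, E i) :=
        measure_mono (Set.biUnion_subset_biUnion_left fun i hi ↦ hk k le_rfl i hi)
end

section
/- Let G = (V ⊔ W, ℰ) be a finite bipartite graph with ℰ ⊆ V × W, and let μ, ν be finitely supported nonnegative weight functions on V and W respectively with μ(V), ν(W) > 0. Define the weight of ℰ as w(ℰ) = ∑_{(v,w) ∈ ℰ} μ(v)ν(w). Then there exists a nonempty sub-edge-set ℰ' ⊆ ℰ with restricted vertex sets V' = {v : ∃w, (v,w) ∈ ℰ'}, W' = {w : ∃v, (v,w) ∈ ℰ'} such that w(ℰ')/√(μ(V')·ν(W')) ≥ w(ℰ)/√(μ(V)·ν(W)), and for every v ∈ V' the neighbourhood satisfies ν(Γ_{ℰ'}(v)) ≥ (1/2)·w(ℰ')/μ(V'), and symmetrically for every w ∈ W', μ(Γ_{ℰ'}(w)) ≥ (1/2)·w(ℰ')/ν(W'). -/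
/-!
Repeatedly delete all edges at a vertex whose degree is below half the average. Deleting a
vertex `v ∈ V'` of degree `d < w(ℰ') / (2 μ(V'))` removes weight `μ(v) d`, i.e. less than the
fraction `s / 2` of `w(ℰ')` where `s = μ(v) / μ(V')`, while `μ(V')` drops by the factor `1 - s`
and `ν(W')` does not grow. Since `(1 - s / 2)² ≥ 1 - s`, the density `w(ℰ') / √(μ(V') ν(W'))`
does not decrease, and a positive fraction of the weight survives. The process stops at a subgraph
with all degrees large, and the density of `ℰ` itself only improves when `μ(V) ν(W)` is replaced
by the masses of the vertices actually incident to `ℰ`.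
-/

open Finset

lemma mul_sqrt_sub_le_sub_half_mul_sqrt {a t : ℝ} (ht : 0 ≤ t) (hta : t ≤ a) :
    a * √(a - t) ≤ (a - t / 2) * √a := by
  have ha : 0 ≤ a := ht.trans hta
  -- AM–GM for `a` and `a - t`
  have hamgm : √(a * (a - t)) ≤ a - t / 2 :=
    Real.sqrt_le_iff.mpr ⟨by linarith, by nlinarith [sq_nonneg t]⟩
  calc a * √(a - t) = √a * √(a * (a - t)) := by
        rw [Real.sqrt_mul ha, ← mul_assoc, Real.mul_self_sqrt ha]
    _ ≤ √a * (a - t / 2) := by gcongr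
    _ = (a - t / 2) * √a := mul_comm _ _

lemma div_sqrt_mul_le_div_sqrt_mul {w w' a a' b b' t : ℝ} (hw : 0 ≤ w) (ht : 0 ≤ t)
    (hta : t ≤ a) (hb : 0 < b) (ha' : 0 < a') (hb' : 0 < b') (ha'a : a' ≤ a - t)
    (hb'b : b' ≤ b) (hww' : w * (a - t / 2) ≤ w' * a) :
    w / √(a * b) ≤ w' / √(a' * b') := by
  have ha : 0 < a := by linarith
  rw [div_le_div_iff₀ (by positivity) (by positivity)]
  refine le_of_mul_le_mul_left ?_ ha
  calc a * (w * √(a' * b')) ≤ a * (w * (√(a - t) * √b)) := by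
        rw [← Real.sqrt_mul (by linarith)]
        gcongr
    _ = w * (a * √(a - t)) * √b := by ring
    _ ≤ w * ((a - t / 2) * √a) * √b := by grw [mul_sqrt_sub_le_sub_half_mul_sqrt ht hta]
    _ = w * (a - t / 2) * (√a * √b) := by ring
    _ ≤ w' * a * (√a * √b) := by gcongr
    _ = a * (w' * √(a * b)) := by rw [Real.sqrt_mul ha.le]; ring

namespace Popularity

variable {V W : Type*}

def edgeWeight (μ : V → ℝ) (ν : W → ℝ) (E : Finset (V × W)) : ℝ := ∑ e ∈ E, μ e.1 * ν e.2

def leftMass [DecidableEq V] (μ : V → ℝ) (E : Finset (V × W)) : ℝ := ∑ v ∈ E.image Prod.fst, μ v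

def rightMass [DecidableEq W] (ν : W → ℝ) (E : Finset (V × W)) : ℝ :=
  ∑ w ∈ E.image Prod.snd, ν w

noncomputable def density [DecidableEq V] [DecidableEq W] (μ : V → ℝ) (ν : W → ℝ)
    (E : Finset (V × W)) : ℝ :=
  edgeWeight μ ν E / √(leftMass μ E * rightMass ν E)

def leftDegree [DecidableEq V] (ν : W → ℝ) (E : Finset (V × W)) (v : V) : ℝ :=
  ∑ e ∈ E.filter (fun e => e.1 = v), ν e.2

def rightDegree [DecidableEq W] (μ : V → ℝ) (E : Finset (V × W)) (w : W) : ℝ :=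
  ∑ e ∈ E.filter (fun e => e.2 = w), μ e.1

def IsPopular [DecidableEq V] [DecidableEq W] (μ : V → ℝ) (ν : W → ℝ) (E : Finset (V × W)) :
    Prop :=
  (∀ v ∈ E.image Prod.fst, 1 / 2 * edgeWeight μ ν E / leftMass μ E ≤ leftDegree ν E v) ∧
    ∀ w ∈ E.image Prod.snd, 1 / 2 * edgeWeight μ ν E / rightMass ν E ≤ rightDegree μ E w

variable {μ : V → ℝ} {ν : W → ℝ}

lemma edgeWeight_nonneg (hμ : ∀ v, 0 ≤ μ v) (hν : ∀ w, 0 ≤ ν w) (E : Finset (V × W)) :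
    0 ≤ edgeWeight μ ν E :=
  sum_nonneg fun _ _ => mul_nonneg (hμ _) (hν _)

lemma nonempty_of_edgeWeight_pos {E : Finset (V × W)} (hE : 0 < edgeWeight μ ν E) :
    E.Nonempty :=
  nonempty_of_sum_ne_zero hE.ne'

lemma leftMass_nonneg [DecidableEq V] (hμ : ∀ v, 0 ≤ μ v) (E : Finset (V × W)) :
    0 ≤ leftMass μ E :=
  sum_nonneg fun _ _ => hμ _

lemma rightMass_mono [DecidableEq W] (hν : ∀ w, 0 ≤ ν w) {E F : Finset (V × W)} (h : E ⊆ F) :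
    rightMass ν E ≤ rightMass ν F :=
  sum_le_sum_of_subset_of_nonneg (image_subset_image h) fun _ _ _ => hν _

variable [DecidableEq V] [DecidableEq W]

lemma edgeWeight_le_leftMass_mul_rightMass (hμ : ∀ v, 0 ≤ μ v) (hν : ∀ w, 0 ≤ ν w)
    (E : Finset (V × W)) : edgeWeight μ ν E ≤ leftMass μ E * rightMass ν E := by
  rw [leftMass, rightMass, sum_mul_sum, ← sum_product']
  exact sum_le_sum_of_subset_of_nonneg subset_product fun _ _ _ => mul_nonneg (hμ _) (hν _)

lemma leftMass_pos_and_rightMass_pos (hμ : ∀ v, 0 ≤ μ v) (hν : ∀ w, 0 ≤ ν w)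
    {E : Finset (V × W)} (hE : 0 < edgeWeight μ ν E) : 0 < leftMass μ E ∧ 0 < rightMass ν E :=
  (pos_and_pos_or_neg_and_neg_of_mul_pos
    (hE.trans_le (edgeWeight_le_leftMass_mul_rightMass hμ hν E))).resolve_right
    fun h => (leftMass_nonneg hμ E).not_gt h.1

omit [DecidableEq W] in
lemma edgeWeight_eq_edgeWeight_filter_add (E : Finset (V × W)) (v : V) :
    edgeWeight μ ν E = edgeWeight μ ν (E.filter (fun e => e.1 ≠ v)) + μ v * leftDegree ν E v := by
  rw [edgeWeight, edgeWeight, leftDegree, mul_sum, add_comm,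
    ← sum_filter_add_sum_filter_not E (fun e => e.1 = v)]
  congr 1
  exact sum_congr rfl fun e he => by rw [(mem_filter.mp he).2]

omit [DecidableEq W] in
lemma leftMass_filter_ne_le (hμ : ∀ v, 0 ≤ μ v) {E : Finset (V × W)} {v : V}
    (hv : v ∈ E.image Prod.fst) :
    leftMass μ (E.filter (fun e => e.1 ≠ v)) ≤ leftMass μ E - μ v := by
  rw [leftMass, leftMass, ← sum_erase_eq_sub hv]
  refine sum_le_sum_of_subset_of_nonneg ?_ fun _ _ _ => hμ _
  intro x hx
  obtain ⟨e, he, rfl⟩ := mem_image.mp hx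
  exact mem_erase.mpr ⟨(mem_filter.mp he).2, mem_image_of_mem _ (mem_filter.mp he).1⟩

omit [DecidableEq W] in
lemma filter_ne_ssubset {E : Finset (V × W)} {v : V} (hv : v ∈ E.image Prod.fst) :
    E.filter (fun e => e.1 ≠ v) ⊂ E := by
  obtain ⟨e, he, rfl⟩ := mem_image.mp hv
  exact filter_ssubset.mpr ⟨e, he, not_not.mpr rfl⟩

lemma exists_ssubset_density_le_of_leftDegree_lt (hμ : ∀ v, 0 ≤ μ v) (hν : ∀ w, 0 ≤ ν w)
    {E : Finset (V × W)} {v : V} (hv : v ∈ E.image Prod.fst) (hE : 0 < edgeWeight μ ν E)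
    (hdeg : leftDegree ν E v < 1 / 2 * edgeWeight μ ν E / leftMass μ E) :
    ∃ F ⊂ E, 0 < edgeWeight μ ν F ∧ density μ ν E ≤ density μ ν F := by
  set F := E.filter (fun e => e.1 ≠ v)
  obtain ⟨ha, hb⟩ := leftMass_pos_and_rightMass_pos hμ hν hE
  have hva : μ v ≤ leftMass μ E := single_le_sum (f := μ) (fun _ _ => hμ _) hv
  have hdeg' : leftDegree ν E v * leftMass μ E ≤ edgeWeight μ ν E / 2 := by
    linarith [(lt_div_iff₀ ha).mp hdeg]
  have hF : edgeWeight μ ν E * (leftMass μ E - μ v / 2) ≤ edgeWeight μ ν F * leftMass μ E := by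
    nlinarith [edgeWeight_eq_edgeWeight_filter_add (μ := μ) (ν := ν) E v,
      mul_le_mul_of_nonneg_left hdeg' (hμ v)]
  have hFpos : 0 < edgeWeight μ ν F := by
    by_contra! h
    nlinarith [mul_nonpos_of_nonpos_of_nonneg h ha.le]
  obtain ⟨ha', hb'⟩ := leftMass_pos_and_rightMass_pos hμ hν hFpos
  exact ⟨F, filter_ne_ssubset hv, hFpos, div_sqrt_mul_le_div_sqrt_mul hE.le (hμ v) hva hb ha' hb'
    (leftMass_filter_ne_le hμ hv) (rightMass_mono hν (filter_subset _ _)) hF⟩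

def edgeSwap (E : Finset (V × W)) : Finset (W × V) := E.map (Equiv.prodComm V W).toEmbedding

omit [DecidableEq V] [DecidableEq W] in
@[simp]
lemma edgeSwap_edgeSwap (E : Finset (V × W)) : edgeSwap (edgeSwap E) = E := by
  simp [edgeSwap, map_map]

omit [DecidableEq V] [DecidableEq W] in
lemma edgeSwap_ssubset_iff {E : Finset (V × W)} {F : Finset (W × V)} :
    edgeSwap F ⊂ E ↔ F ⊂ edgeSwap E := by
  conv_lhs => rw [← edgeSwap_edgeSwap E]
  exact map_ssubset_map

omit [DecidableEq V] [DecidableEq W] in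
@[simp]
lemma edgeWeight_edgeSwap (E : Finset (V × W)) :
    edgeWeight ν μ (edgeSwap E) = edgeWeight μ ν E := by
  simp [edgeWeight, edgeSwap, mul_comm]

@[simp]
lemma image_fst_edgeSwap (E : Finset (V × W)) :
    (edgeSwap E).image Prod.fst = E.image Prod.snd := by
  simp [edgeSwap, map_eq_image, image_image]; rfl

@[simp]
lemma image_snd_edgeSwap (E : Finset (V × W)) :
    (edgeSwap E).image Prod.snd = E.image Prod.fst := by
  simp [edgeSwap, map_eq_image, image_image]; rfl

@[simp]
lemma leftMass_edgeSwap (E : Finset (V × W)) : leftMass ν (edgeSwap E) = rightMass ν E := by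
  rw [leftMass, rightMass, image_fst_edgeSwap]

@[simp]
lemma rightMass_edgeSwap (E : Finset (V × W)) : rightMass μ (edgeSwap E) = leftMass μ E := by
  rw [leftMass, rightMass, image_snd_edgeSwap]

@[simp]
lemma density_edgeSwap (E : Finset (V × W)) : density ν μ (edgeSwap E) = density μ ν E := by
  rw [density, density, edgeWeight_edgeSwap, leftMass_edgeSwap, rightMass_edgeSwap, mul_comm]

omit [DecidableEq V] in
@[simp]
lemma leftDegree_edgeSwap (E : Finset (V × W)) (w : W) :
    leftDegree μ (edgeSwap E) w = rightDegree μ E w := by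
  simp [leftDegree, rightDegree, edgeSwap, filter_map, sum_map]; rfl

lemma exists_ssubset_density_le_of_rightDegree_lt (hμ : ∀ v, 0 ≤ μ v) (hν : ∀ w, 0 ≤ ν w)
    {E : Finset (V × W)} {w : W} (hw : w ∈ E.image Prod.snd) (hE : 0 < edgeWeight μ ν E)
    (hdeg : rightDegree μ E w < 1 / 2 * edgeWeight μ ν E / rightMass ν E) :
    ∃ F ⊂ E, 0 < edgeWeight μ ν F ∧ density μ ν E ≤ density μ ν F := by
  rw [← image_fst_edgeSwap] at hw
  rw [← edgeWeight_edgeSwap] at hE hdeg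
  rw [← leftDegree_edgeSwap, ← leftMass_edgeSwap] at hdeg
  obtain ⟨F, hFE, hF, hdens⟩ := exists_ssubset_density_le_of_leftDegree_lt hν hμ hw hE hdeg
  refine ⟨edgeSwap F, edgeSwap_ssubset_iff.mpr hFE, ?_, ?_⟩
  · rwa [← edgeSwap_edgeSwap F, edgeWeight_edgeSwap] at hF
  · rwa [density_edgeSwap, ← edgeSwap_edgeSwap F, density_edgeSwap] at hdens

lemma exists_isPopular_subset (hμ : ∀ v, 0 ≤ μ v) (hν : ∀ w, 0 ≤ ν w) (E : Finset (V × W))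
    (hE : 0 < edgeWeight μ ν E) :
    ∃ F ⊆ E, 0 < edgeWeight μ ν F ∧ density μ ν E ≤ density μ ν F ∧ IsPopular μ ν F := by
  induction E using Finset.strongInduction with
  | H E ih =>
  by_cases hpop : IsPopular μ ν E
  · exact ⟨E, subset_rfl, hE, le_rfl, hpop⟩
  obtain ⟨F, hFE, hF, hdens⟩ : ∃ F ⊂ E, 0 < edgeWeight μ ν F ∧ density μ ν E ≤ density μ ν F := by
    simp only [IsPopular, not_and_or, not_forall, not_le] at hpop
    rcases hpop with ⟨v, hv, hdeg⟩ | ⟨w, hw, hdeg⟩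
    · exact exists_ssubset_density_le_of_leftDegree_lt hμ hν hv hE hdeg
    · exact exists_ssubset_density_le_of_rightDegree_lt hμ hν hw hE hdeg
  obtain ⟨G, hGF, hG, hdensG, hpopG⟩ := ih F hFE hF
  exact ⟨G, hGF.trans hFE.subset, hG, hdens.trans hdensG, hpopG⟩

lemma edgeWeight_div_sqrt_total_le_density [Fintype V] [Fintype W] (hμ : ∀ v, 0 ≤ μ v)
    (hν : ∀ w, 0 ≤ ν w) {E : Finset (V × W)} (hE : 0 < edgeWeight μ ν E) :
    edgeWeight μ ν E / √((∑ v, μ v) * ∑ w, ν w) ≤ density μ ν E := by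
  obtain ⟨ha, hb⟩ := leftMass_pos_and_rightMass_pos hμ hν hE
  refine div_le_div_of_nonneg_left hE.le (by positivity) (Real.sqrt_le_sqrt ?_)
  exact mul_le_mul (sum_le_univ_sum_of_nonneg fun _ => hμ _)
    (sum_le_univ_sum_of_nonneg fun _ => hν _) hb.le (sum_nonneg fun _ _ => hμ _)

end Popularity

theorem popularity_principle_general {V W : Type*} [Fintype V] [Fintype W]
    [DecidableEq V] [DecidableEq W]
    (E : Finset (V × W)) (μ : V → ℝ) (ν : W → ℝ)
    (hμ : ∀ v, 0 ≤ μ v) (hν : ∀ w, 0 ≤ ν w)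
    (hE : E.Nonempty) :
    ∃ E' : Finset (V × W), E' ⊆ E ∧ E'.Nonempty ∧
      (∑ e ∈ E', μ e.1 * ν e.2) /
          Real.sqrt ((∑ v ∈ E'.image Prod.fst, μ v) * (∑ w ∈ E'.image Prod.snd, ν w)) ≥
        (∑ e ∈ E, μ e.1 * ν e.2) / Real.sqrt ((∑ v, μ v) * (∑ w, ν w)) ∧
      (∀ v ∈ E'.image Prod.fst,
        (∑ e ∈ E'.filter (fun e => e.1 = v), ν e.2) ≥
          (1 / 2) * (∑ e ∈ E', μ e.1 * ν e.2) / (∑ v ∈ E'.image Prod.fst, μ v)) ∧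
      (∀ w ∈ E'.image Prod.snd,
        (∑ e ∈ E'.filter (fun e => e.2 = w), μ e.1) ≥
          (1 / 2) * (∑ e ∈ E', μ e.1 * ν e.2) / (∑ w ∈ E'.image Prod.snd, ν w)) := by
  obtain hw | hw := (Popularity.edgeWeight_nonneg hμ hν E).eq_or_lt
  · rw [Popularity.edgeWeight] at hw
    refine ⟨E, subset_rfl, hE, ?_, fun v _ => ?_, fun w _ => ?_⟩ <;>
      simp [← hw, sum_nonneg, hμ, hν]
  · obtain ⟨F, hFE, hF, hdens, hleft, hright⟩ := Popularity.exists_isPopular_subset hμ hν E hw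
    exact ⟨F, hFE, Popularity.nonempty_of_edgeWeight_pos hF,
      (Popularity.edgeWeight_div_sqrt_total_le_density hμ hν hw).trans hdens, hleft, hright⟩

theorem popularity_principle {V W : Type*} [Fintype V] [Fintype W]
    [DecidableEq V] [DecidableEq W]
    (E : Finset (V × W)) (μ : V → ℝ) (ν : W → ℝ)
    (hμ : ∀ v, 0 ≤ μ v) (hν : ∀ w, 0 ≤ ν w)
    (hμpos : 0 < ∑ v, μ v) (hνpos : 0 < ∑ w, ν w) (hE : E.Nonempty) :
    ∃ E' : Finset (V × W), E' ⊆ E ∧ E'.Nonempty ∧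
      (∑ e ∈ E', μ e.1 * ν e.2) /
          Real.sqrt ((∑ v ∈ E'.image Prod.fst, μ v) * (∑ w ∈ E'.image Prod.snd, ν w)) ≥
        (∑ e ∈ E, μ e.1 * ν e.2) / Real.sqrt ((∑ v, μ v) * (∑ w, ν w)) ∧
      (∀ v ∈ E'.image Prod.fst,
        (∑ e ∈ E'.filter (fun e => e.1 = v), ν e.2) ≥
          (1 / 2) * (∑ e ∈ E', μ e.1 * ν e.2) / (∑ v ∈ E'.image Prod.fst, μ v)) ∧
      (∀ w ∈ E'.image Prod.snd,
        (∑ e ∈ E'.filter (fun e => e.2 = w), μ e.1) ≥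
          (1 / 2) * (∑ e ∈ E', μ e.1 * ν e.2) / (∑ w ∈ E'.image Prod.snd, ν w)) :=
  popularity_principle_general E μ ν hμ hν hE
end

section
/- Let q, r be positive integers, and let D = max(q·ψ(r), r·ψ(q))/gcd(q,r) for reals ψ(q), ψ(r) ∈ (0, 1/2]. Suppose j ≥ 1 is an integer such that ∑_{p | qr/gcd(q,r)², p > e^{j+1}} 1/p ≤ 10, and D ≤ e^j. Then ∏_{p | qr/gcd(q,r)², p > D} (1 + 1/p) ≤ K·j for an absolute constant K, where products/sums are over primes. -/
/-!
Bound the product by `exp (∑ 1/p)`. The primes above `e^(j+1)` contribute at most `10` by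
hypothesis; all other primes lie below `x = e^(j+1)`, and the upper half of Mertens' second theorem,
`∑_{p ≤ x} 1/p ≤ log log x + O(1) = log (j + 1) + O(1)`, bounds their contribution, so that the
product is `O(j)`. Mertens' bound follows by partial summation from the upper half of his first
theorem, `∑_{p ≤ N} log p / p ≤ log N + log 4`, which comes from comparing Legendre's formula for
`log N!` with `N log N` and Chebyshev's `θ(N) ≤ N log 4`.
-/

open Finset Real
open Nat (primesLE)
open scoped Nat

theorem Nat.div_le_factorization_factorial {p : ℕ} (hp : p.Prime) (N : ℕ) :
    N / p ≤ (N !).factorization p :=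
  calc N / p ≤ ((p * (N / p))!).factorization p := by
        rw [Nat.factorization_factorial_mul hp]; exact Nat.le_add_left _ _
    _ ≤ (N !).factorization p :=
        (Nat.factorization_le_iff_dvd (Nat.factorial_ne_zero _) (Nat.factorial_ne_zero _)).mpr
          (Nat.factorial_dvd_factorial (Nat.mul_div_le N p)) p

theorem sum_primesLE_div_mul_log_le_log_factorial (N : ℕ) :
    ∑ p ∈ primesLE N, ((N / p : ℕ) : ℝ) * log p ≤ log (N ! : ℕ) := by
  have hsub : primesLE N ⊆ (N !).primeFactors := fun p hp => by
    have hp' := Nat.prime_of_mem_primesLE hp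
    exact Nat.mem_primeFactors.mpr ⟨hp', hp'.dvd_factorial.mpr (Nat.le_of_mem_primesLE hp),
      Nat.factorial_ne_zero N⟩
  calc ∑ p ∈ primesLE N, ((N / p : ℕ) : ℝ) * log p
      ≤ ∑ p ∈ primesLE N, ((N !).factorization p : ℝ) * log p := by
        gcongr with p hp
        exact Nat.div_le_factorization_factorial (Nat.prime_of_mem_primesLE hp) N
    _ ≤ ∑ p ∈ (N !).primeFactors, ((N !).factorization p : ℝ) * log p := by
        refine sum_le_sum_of_subset_of_nonneg hsub fun p _ _ => ?_
        positivity
    _ = log (N ! : ℕ) := (log_nat_eq_sum_factorization _).symm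

theorem sum_primesLE_log_div_le (N : ℕ) : ∑ p ∈ primesLE N, log p / p ≤ log N + log 4 := by
  rcases N.eq_zero_or_pos with rfl | hN
  · simpa using log_nonneg (by norm_num : (1 : ℝ) ≤ 4)
  have hN' : (0 : ℝ) < N := by exact_mod_cast hN
  rw [← mul_le_mul_iff_of_pos_left hN', mul_sum]
  calc ∑ p ∈ primesLE N, (N : ℝ) * (log p / p)
      ≤ ∑ p ∈ primesLE N, (((N / p : ℕ) : ℝ) * log p + log p) := by
        gcongr with p hp
        have hp := Nat.prime_of_mem_primesLE hp
        have hfloor : (N : ℝ) / p ≤ (N / p : ℕ) + 1 := by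
          rw [← Nat.floor_div_eq_div (K := ℝ)]; exact (Nat.lt_floor_add_one _).le
        calc (N : ℝ) * (log p / p) = N / p * log p := by ring
          _ ≤ ((N / p : ℕ) + 1) * log p := by gcongr
          _ = _ := by ring
    _ = ∑ p ∈ primesLE N, ((N / p : ℕ) : ℝ) * log p + Chebyshev.theta N := by
        rw [sum_add_distrib, Chebyshev.theta_eq_sum_primesLE_log]
    _ ≤ log (N ! : ℕ) + log 4 * N :=
        add_le_add (sum_primesLE_div_mul_log_le_log_factorial N)
          (Chebyshev.theta_le_log4_mul_x hN'.le)
    _ ≤ N * log N + log 4 * N := by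
        gcongr
        calc log (N ! : ℕ) ≤ log ((N ^ N : ℕ) : ℝ) := by
              gcongr
              exact Nat.factorial_le_pow N
          _ = N * log N := by push_cast; rw [log_pow]
    _ = N * (log N + log 4) := by ring

theorem mul_inv_sub_inv_le_log_sub_log {a b : ℝ} (ha : 0 < a) (hb : 0 < b) :
    a * (a⁻¹ - b⁻¹) ≤ log b - log a := by
  have := one_sub_inv_le_log_of_pos (div_pos hb ha)
  rw [log_div hb.ne' ha.ne', inv_div] at this
  rwa [mul_sub, mul_inv_cancel₀ ha.ne', ← div_eq_mul_inv]

/-- Partial summation of `∑ 1/p = ∑ (log p / p) · (log p)⁻¹`, one step at a time: passing from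
`N` to `N + 1` adds `((log N)⁻¹ - (log (N + 1))⁻¹) · ∑_{p ≤ N} log p / p` to the left side. -/
theorem sum_primesLE_one_sub_log_div_log_div_le {N : ℕ} (hN : 2 ≤ N) :
    ∑ p ∈ primesLE N, (1 - log p / log N) / p
      ≤ log (log N) - log (log 2) + log 4 * ((log 2)⁻¹ - (log N)⁻¹) := by
  induction N, hN using Nat.le_induction with
  | base => norm_num [Nat.primesLE_succ, Nat.primesLE_one, Nat.prime_two]
  | succ N hN ih =>
    have hlogN : 0 < log N := log_pos (by exact_mod_cast hN)
    have hlogN1 : 0 < log (N + 1 : ℕ) := log_pos (by norm_cast; omega)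
    have hmono : log N ≤ log (N + 1 : ℕ) := log_le_log (by positivity) (by norm_cast; omega)
    have hΔ : 0 ≤ (log N)⁻¹ - (log (N + 1 : ℕ))⁻¹ := sub_nonneg.mpr (inv_anti₀ hlogN hmono)
    have hdrop : ∑ p ∈ primesLE (N + 1), (1 - log p / log (N + 1 : ℕ)) / p
        = ∑ p ∈ primesLE N, (1 - log p / log (N + 1 : ℕ)) / p := by
      refine (sum_subset (Nat.primesLE_mono (Nat.le_succ N)) fun p hp hpN => ?_).symm
      obtain rfl : p = N + 1 := by
        obtain ⟨hpN1, hpp⟩ := Nat.mem_primesLE.mp hp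
        have : ¬p ≤ N := fun h => hpN (Nat.mem_primesLE.mpr ⟨h, hpp⟩)
        omega
      rw [div_self hlogN1.ne', sub_self, zero_div]
    have hsplit : ∑ p ∈ primesLE N, (1 - log p / log (N + 1 : ℕ)) / p
        = ∑ p ∈ primesLE N, (1 - log p / log N) / p
          + ((log N)⁻¹ - (log (N + 1 : ℕ))⁻¹) * ∑ p ∈ primesLE N, log p / p := by
      rw [mul_sum, ← sum_add_distrib]
      refine sum_congr rfl fun p _ => ?_
      ring
    have hstep : ((log N)⁻¹ - (log (N + 1 : ℕ))⁻¹) * ∑ p ∈ primesLE N, log p / p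
        ≤ log (log (N + 1 : ℕ)) - log (log N) + log 4 * ((log N)⁻¹ - (log (N + 1 : ℕ))⁻¹) :=
      calc ((log N)⁻¹ - (log (N + 1 : ℕ))⁻¹) * ∑ p ∈ primesLE N, log p / p
          ≤ ((log N)⁻¹ - (log (N + 1 : ℕ))⁻¹) * (log N + log 4) :=
            mul_le_mul_of_nonneg_left (sum_primesLE_log_div_le N) hΔ
        _ = log N * ((log N)⁻¹ - (log (N + 1 : ℕ))⁻¹)
              + log 4 * ((log N)⁻¹ - (log (N + 1 : ℕ))⁻¹) := by ring
        _ ≤ _ := by gcongr; exact mul_inv_sub_inv_le_log_sub_log hlogN hlogN1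
    rw [hdrop, hsplit]
    linarith

theorem sum_primesLE_one_div_le {N : ℕ} (hN : 2 ≤ N) :
    ∑ p ∈ primesLE N, 1 / (p : ℝ) ≤ log (log N) + 3 - log (log 2) := by
  have hlog2 : 0 < log 2 := log_pos one_lt_two
  have hlogN : 0 < log N := log_pos (by exact_mod_cast hN)
  have hlog4 : log 4 = 2 * log 2 := by
    rw [show (4 : ℝ) = 2 ^ 2 by norm_num, log_pow, Nat.cast_ofNat]
  have habel : ∑ p ∈ primesLE N, 1 / (p : ℝ)
      = ∑ p ∈ primesLE N, (1 - log p / log N) / p + (∑ p ∈ primesLE N, log p / p) / log N := by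
    rw [sum_div, ← sum_add_distrib]
    refine sum_congr rfl fun p _ => ?_
    field_simp
    ring
  have hW : (∑ p ∈ primesLE N, log p / p) / log N ≤ 1 + log 4 * (log N)⁻¹ := by
    rw [div_le_iff₀ hlogN, add_mul, inv_mul_cancel_right₀ hlogN.ne', one_mul]
    exact sum_primesLE_log_div_le N
  have hG := sum_primesLE_one_sub_log_div_log_div_le hN
  have h4 : log 4 * (log 2)⁻¹ = 2 := by rw [hlog4]; field_simp
  rw [habel]
  linarith

theorem sum_filter_le_one_div_le {s : Finset ℕ} (hs : ∀ p ∈ s, p.Prime) {x : ℝ} (hx : 2 ≤ x) :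
    ∑ p ∈ s.filter (fun p : ℕ => (p : ℝ) ≤ x), 1 / (p : ℝ) ≤ log (log x) + 3 - log (log 2) := by
  have hN : 2 ≤ ⌊x⌋₊ := Nat.le_floor (by exact_mod_cast hx)
  have hsub : s.filter (fun p : ℕ => (p : ℝ) ≤ x) ⊆ primesLE ⌊x⌋₊ := fun p hp => by
    obtain ⟨hps, hpx⟩ := mem_filter.mp hp
    exact Nat.mem_primesLE.mpr ⟨Nat.le_floor hpx, hs p hps⟩
  have hfloor : log (log ⌊x⌋₊) ≤ log (log x) := by
    have : 0 < log ⌊x⌋₊ := log_pos (by exact_mod_cast hN)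
    gcongr
    exact Nat.floor_le (by linarith)
  calc ∑ p ∈ s.filter (fun p : ℕ => (p : ℝ) ≤ x), 1 / (p : ℝ)
      ≤ ∑ p ∈ primesLE ⌊x⌋₊, 1 / (p : ℝ) :=
        sum_le_sum_of_subset_of_nonneg hsub fun _ _ _ => by positivity
    _ ≤ log (log ⌊x⌋₊) + 3 - log (log 2) := sum_primesLE_one_div_le hN
    _ ≤ log (log x) + 3 - log (log 2) := by linarith

theorem sum_one_div_le_add_sum_filter_lt {s : Finset ℕ} (hs : ∀ p ∈ s, p.Prime) {x : ℝ}
    (hx : 2 ≤ x) :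
    ∑ p ∈ s, 1 / (p : ℝ)
      ≤ log (log x) + 3 - log (log 2) + ∑ p ∈ s.filter (fun p : ℕ => x < p), 1 / (p : ℝ) := by
  rw [← sum_filter_add_sum_filter_not s (fun p : ℕ => (p : ℝ) ≤ x)]
  simp_rw [not_le]
  gcongr
  exact sum_filter_le_one_div_le hs hx

theorem dyadic_overlap_control :
    ∃ K : ℝ, 0 < K ∧
      ∀ (q r : ℕ) (ψq ψr : ℝ) (j : ℕ), 0 < q → 0 < r →
        0 < ψq → ψq ≤ 1 / 2 → 0 < ψr → ψr ≤ 1 / 2 → 1 ≤ j →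
        (∑ p ∈ ((q * r / Nat.gcd q r ^ 2).primeFactors.filter
            (fun p : ℕ => Real.exp (j + 1) < (p : ℝ))), (1 / (p : ℝ))) ≤ 10 →
        max ((q : ℝ) * ψr) ((r : ℝ) * ψq) / (Nat.gcd q r : ℝ) ≤ Real.exp j →
        (∏ p ∈ ((q * r / Nat.gcd q r ^ 2).primeFactors.filter
            (fun p : ℕ => max ((q : ℝ) * ψr) ((r : ℝ) * ψq) / (Nat.gcd q r : ℝ) < (p : ℝ))),
          (1 + 1 / (p : ℝ))) ≤ K * j := by
  refine ⟨2 * exp (13 - log (log 2)), by positivity, ?_⟩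
  intro q r ψq ψr j _ _ _ _ _ _ hj htop _
  set P := (q * r / Nat.gcd q r ^ 2).primeFactors
  set D := max ((q : ℝ) * ψr) ((r : ℝ) * ψq) / (Nat.gcd q r : ℝ)
  have hj' : (1 : ℝ) ≤ j := by exact_mod_cast hj
  have hx : 2 ≤ exp ((j : ℝ) + 1) := by linarith [add_one_le_exp ((j : ℝ) + 1)]
  have hsum : ∑ p ∈ P.filter (fun p : ℕ => D < p), 1 / (p : ℝ) ≤ log (j + 1) + 13 - log (log 2) :=
    calc ∑ p ∈ P.filter (fun p : ℕ => D < p), 1 / (p : ℝ)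
        ≤ ∑ p ∈ P, 1 / (p : ℝ) :=
          sum_le_sum_of_subset_of_nonneg (filter_subset _ _) fun _ _ _ => by positivity
      _ ≤ log (log (exp ((j : ℝ) + 1))) + 3 - log (log 2) + 10 :=
          (sum_one_div_le_add_sum_filter_lt (fun _ => Nat.prime_of_mem_primeFactors) hx).trans
            (by gcongr)
      _ = log (j + 1) + 13 - log (log 2) := by rw [log_exp]; ring
  calc ∏ p ∈ P.filter (fun p : ℕ => D < p), (1 + 1 / (p : ℝ))
      ≤ exp (∑ p ∈ P.filter (fun p : ℕ => D < p), 1 / (p : ℝ)) :=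
        prod_one_add_le_exp_sum _ fun _ => by positivity
    _ ≤ exp (log (j + 1) + (13 - log (log 2))) := by gcongr; linarith
    _ = (j + 1) * exp (13 - log (log 2)) := by rw [exp_add, exp_log (by positivity)]
    _ ≤ 2 * exp (13 - log (log 2)) * j := by nlinarith [exp_pos (13 - log (log 2))]
end
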